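/- (Multiplicative weights with switching costs.) Let N ≥ 2, T ≥ 1, D ≥ 1, and set η = √(ln(N)/(2·D·T)). Let l₁, …, l_T ∈ [0,1]^N be any loss sequence, and define z₁, …, z_T ∈ Δ(N) by z₁ = (1/N, …, 1/N) and z_{t+1}(i) = z_t(i)·e^{−η·l_t(i)} / Σ_{j=1}^N z_t(j)·e^{−η·l_t(j)}. Then for every i ∈ {1, …, N}: Σ_{t=1}^T ⟨l_t, z_t⟩ + D·Σ_{t=2}^T ‖z_t − z_{t−1}‖ ≤ Σ_{t=1}^T l_t(i) + √(8·D·T·ln(N)). -/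
import Mathlib


/-- Total-variation distance between two points of the simplex,
    ‖z − z′‖ = (1/2)·Σᵢ |zᵢ − z′ᵢ|. -/
noncomputable def tv {N : ℕ} (z z' : Fin N → ℝ) : ℝ := (1/2) * ∑ i, |z i - z' i|

theorem exp_neg_le_quad {x : ℝ} (hx : 0 ≤ x) : Real.exp (-x) ≤ 1 - x + x^2 := by
  have h1 : (0:ℝ) ≤ 1 - x + x^2 := by nlinarith [sq_nonneg (2*x - 1)]
  have h2 : 1 + x ≤ Real.exp x := by linarith [Real.add_one_le_exp x]
  have h3 : (0:ℝ) < Real.exp x := Real.exp_pos x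
  rw [Real.exp_neg, inv_eq_one_div, div_le_iff₀ h3]
  nlinarith [mul_nonneg h1 (sub_nonneg.mpr h2), pow_nonneg hx 3]

/-- Multiplicative weights with switching costs. -/
theorem stmt_11 (N T : ℕ) (hN : 2 ≤ N) (hT : 1 ≤ T) (D : ℝ) (hD : 1 ≤ D)
    (η : ℝ) (hη : η = Real.sqrt (Real.log N / (2 * D * T)))
    (l : ℕ → Fin N → ℝ) (hl : ∀ t i, l t i ∈ Set.Icc (0:ℝ) 1)
    (z : ℕ → Fin N → ℝ)
    (hz1 : ∀ i, z 1 i = 1 / N)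
    (hzrec : ∀ t, 1 ≤ t → ∀ i, z (t+1) i =
      z t i * Real.exp (-η * l t i) / ∑ j, z t j * Real.exp (-η * l t j)) :
    ∀ i : Fin N,
      (∑ t ∈ Finset.Icc 1 T, ∑ j, l t j * z t j)
          + D * ∑ t ∈ Finset.Icc 2 T, tv (z t) (z (t-1))
        ≤ (∑ t ∈ Finset.Icc 1 T, l t i) + Real.sqrt (8 * D * T * Real.log N) := by
  intro i
  haveI : Nonempty (Fin N) := ⟨⟨0, by omega⟩⟩
  have hN1 : (1:ℝ) < N := by exact_mod_cast (by omega : 1 < N)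
  have hN0 : (0:ℝ) < N := by linarith
  have hG : 0 < Real.log N := Real.log_pos hN1
  have hT0 : (0:ℝ) < T := by exact_mod_cast (by omega : 0 < T)
  have hD0 : (0:ℝ) < D := lt_of_lt_of_le one_pos hD
  have hden : (0:ℝ) < 2 * D * T := by positivity
  have hη2 : η ^ 2 = Real.log N / (2 * D * T) := by
    rw [hη]; exact Real.sq_sqrt (le_of_lt (div_pos hG hden))
  have hηpos : 0 < η := by rw [hη]; exact Real.sqrt_pos.mpr (div_pos hG hden)
  have hGeq : Real.log N = 2 * D * T * η ^ 2 := by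
    rw [hη2]; field_simp
  -- invariant: z t is a positive probability vector
  have hkey : ∀ t, 1 ≤ t → (∀ j, 0 < z t j) ∧ (∑ j, z t j) = 1 := by
    intro t ht
    induction t, ht using Nat.le_induction with
    | base =>
      constructor
      · intro j; rw [hz1 j]; exact div_pos one_pos hN0
      · rw [Finset.sum_congr rfl (fun j _ => hz1 j), Finset.sum_const, Finset.card_univ,
          Fintype.card_fin, nsmul_eq_mul, mul_one_div, div_self hN0.ne']
    | succ t ht ih =>
      have hSpos : 0 < ∑ j, z t j * Real.exp (-η * l t j) :=
        Finset.sum_pos (fun j _ => mul_pos (ih.1 j) (Real.exp_pos _)) Finset.univ_nonempty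
      constructor
      · intro j; rw [hzrec t ht j]
        exact div_pos (mul_pos (ih.1 j) (Real.exp_pos _)) hSpos
      · rw [Finset.sum_congr rfl (fun j _ => hzrec t ht j), ← Finset.sum_div,
          div_self hSpos.ne']
  have hS : ∀ t, 1 ≤ t → 0 < ∑ j, z t j * Real.exp (-η * l t j) :=
    fun t ht => Finset.sum_pos (fun j _ => mul_pos ((hkey t ht).1 j) (Real.exp_pos _))
      Finset.univ_nonempty
  have hSle : ∀ t, 1 ≤ t → (∑ j, z t j * Real.exp (-η * l t j)) ≤ 1 := by
    intro t ht
    calc (∑ j, z t j * Real.exp (-η * l t j)) ≤ ∑ j, z t j := by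
          apply Finset.sum_le_sum; intro j _
          have h1 : Real.exp (-η * l t j) ≤ 1 := by
            rw [Real.exp_le_one_iff, neg_mul]
            exact neg_nonpos.mpr (mul_nonneg hηpos.le (hl t j).1)
          nlinarith [((hkey t ht).1 j).le]
      _ = 1 := (hkey t ht).2
  -- per-step log identity
  have hstep : ∀ t, 1 ≤ t → Real.log (z (t+1) i) =
      Real.log (z t i) + (-η * l t i) - Real.log (∑ j, z t j * Real.exp (-η * l t j)) := by
    intro t ht
    rw [hzrec t ht i, Real.log_div (mul_pos ((hkey t ht).1 i) (Real.exp_pos _)).ne'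
        (hS t ht).ne', Real.log_mul ((hkey t ht).1 i).ne' (Real.exp_ne_zero _), Real.log_exp]
  -- telescoping
  have htel : ∀ n, 1 ≤ n → Real.log (z (n+1) i) =
      Real.log (z 1 i) + ∑ t ∈ Finset.Icc 1 n,
        ((-η * l t i) - Real.log (∑ j, z t j * Real.exp (-η * l t j))) := by
    intro n hn
    induction n, hn using Nat.le_induction with
    | base => rw [hstep 1 le_rfl]; simp [Finset.Icc_self]; ring
    | succ n hn ih =>
      rw [hstep (n+1) (by omega), ih, Finset.sum_Icc_succ_top (by omega : 1 ≤ n + 1)]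
      ring
  -- bound on log of normalizer
  have hlogS : ∀ t, 1 ≤ t →
      Real.log (∑ j, z t j * Real.exp (-η * l t j)) ≤
        -η * (∑ j, l t j * z t j) + η^2 := by
    intro t ht
    have h1 : (∑ j, z t j * Real.exp (-η * l t j)) ≤
        1 - η * (∑ j, l t j * z t j) + η^2 := by
      have h2 : ∀ j : Fin N, z t j * Real.exp (-η * l t j) ≤
          z t j - η * (l t j * z t j) + η^2 * z t j := by
        intro j
        have hx : 0 ≤ η * l t j := mul_nonneg hηpos.le (hl t j).1
        have he' : Real.exp (-η * l t j) ≤ 1 - η * l t j + (η * l t j)^2 := by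
          rw [neg_mul]; exact exp_neg_le_quad hx
        have hzj := ((hkey t ht).1 j).le
        have hl1 := (hl t j).2
        have hl0 := (hl t j).1
        have hq : (η * l t j)^2 ≤ η^2 := by
          nlinarith [mul_nonneg (mul_nonneg (sq_nonneg η) (sub_nonneg.mpr hl1))
            (by linarith : (0:ℝ) ≤ 1 + l t j)]
        have ha := mul_le_mul_of_nonneg_left he' hzj
        have hb := mul_le_mul_of_nonneg_left hq hzj
        nlinarith [ha, hb]
      calc (∑ j, z t j * Real.exp (-η * l t j))
          ≤ ∑ j, (z t j - η * (l t j * z t j) + η^2 * z t j) :=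
            Finset.sum_le_sum (fun j _ => h2 j)
        _ = (∑ j, z t j) - η * (∑ j, l t j * z t j) + η^2 * (∑ j, z t j) := by
            rw [Finset.sum_add_distrib, Finset.sum_sub_distrib, Finset.mul_sum,
              Finset.mul_sum]
        _ = 1 - η * (∑ j, l t j * z t j) + η^2 := by rw [(hkey t ht).2]; ring
    have h3 := Real.log_le_sub_one_of_pos (hS t ht)
    linarith
  -- main regret bound
  have hmain : (∑ t ∈ Finset.Icc 1 T, ∑ j, l t j * z t j) ≤
      (∑ t ∈ Finset.Icc 1 T, l t i) + 2*D*T*η + T*η := by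
    have h0 : Real.log (z (T+1) i) ≤ 0 := by
      apply Real.log_nonpos ((hkey (T+1) (by omega)).1 i).le
      calc z (T+1) i ≤ ∑ j, z (T+1) j :=
            Finset.single_le_sum (fun j _ => ((hkey (T+1) (by omega)).1 j).le)
              (Finset.mem_univ i)
        _ = 1 := (hkey (T+1) (by omega)).2
    have h1 : Real.log (z 1 i) = -Real.log N := by rw [hz1 i, one_div, Real.log_inv]
    have h2 := htel T hT
    have h3 : ∑ t ∈ Finset.Icc 1 T,
        ((-η * l t i) - Real.log (∑ j, z t j * Real.exp (-η * l t j)))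
        = -η * (∑ t ∈ Finset.Icc 1 T, l t i)
          - ∑ t ∈ Finset.Icc 1 T, Real.log (∑ j, z t j * Real.exp (-η * l t j)) := by
      rw [Finset.sum_sub_distrib, Finset.mul_sum]
    have h4 : ∑ t ∈ Finset.Icc 1 T, Real.log (∑ j, z t j * Real.exp (-η * l t j))
        ≤ -η * (∑ t ∈ Finset.Icc 1 T, ∑ j, l t j * z t j) + T * η^2 := by
      calc ∑ t ∈ Finset.Icc 1 T, Real.log (∑ j, z t j * Real.exp (-η * l t j))
          ≤ ∑ t ∈ Finset.Icc 1 T, (-η * (∑ j, l t j * z t j) + η^2) :=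
            Finset.sum_le_sum (fun t ht => hlogS t (Finset.mem_Icc.mp ht).1)
        _ = -η * (∑ t ∈ Finset.Icc 1 T, ∑ j, l t j * z t j) + T * η^2 := by
            rw [Finset.sum_add_distrib, Finset.sum_const, Nat.card_Icc, ← Finset.mul_sum,
              nsmul_eq_mul]
            norm_num
    rw [h1, h3] at h2
    have h5 : η * (∑ t ∈ Finset.Icc 1 T, ∑ j, l t j * z t j) ≤
        η * ((∑ t ∈ Finset.Icc 1 T, l t i) + 2*D*T*η + T*η) := by
      nlinarith [h0, h2, h4, hGeq]
    exact le_of_mul_le_mul_left h5 hηpos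
  -- switching-cost bound
  have htv : ∀ t ∈ Finset.Icc 2 T, tv (z t) (z (t-1)) ≤ η := by
    intro t ht
    obtain ⟨h2t, htT⟩ := Finset.mem_Icc.mp ht
    obtain ⟨s, rfl⟩ : ∃ s, t = s + 1 := ⟨t - 1, by omega⟩
    have hs1 : 1 ≤ s := by omega
    simp only [Nat.add_sub_cancel]
    have hub : ∀ j, z s j - z (s+1) j ≤ η * z s j := by
      intro j
      have hzj := (hkey s hs1).1 j
      have hge : z s j * Real.exp (-η) ≤ z (s+1) j := by
        rw [hzrec s hs1 j]
        have he1 : Real.exp (-η) ≤ Real.exp (-η * l s j) := by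
          apply Real.exp_le_exp.mpr
          nlinarith [(hl s j).2, (hl s j).1, hηpos.le]
        have hd : z s j * Real.exp (-η * l s j) ≤
            z s j * Real.exp (-η * l s j) / (∑ k, z s k * Real.exp (-η * l s k)) :=
          le_div_self (mul_nonneg hzj.le (Real.exp_pos _).le) (hS s hs1) (hSle s hs1)
        calc z s j * Real.exp (-η) ≤ z s j * Real.exp (-η * l s j) :=
              mul_le_mul_of_nonneg_left he1 hzj.le
          _ ≤ _ := hd
      have hexp : 1 - η ≤ Real.exp (-η) := by linarith [Real.add_one_le_exp (-η)]
      nlinarith [mul_le_mul_of_nonneg_left hexp hzj.le]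
    have habs : ∀ j : Fin N, |z (s+1) j - z s j| ≤
        (z (s+1) j - z s j) + 2*(η * z s j) := by
      intro j
      have h1 := hub j
      have h2 : 0 ≤ η * z s j := mul_nonneg hηpos.le ((hkey s hs1).1 j).le
      rcases abs_cases (z (s+1) j - z s j) with ⟨he, _⟩ | ⟨he, _⟩ <;> rw [he] <;> linarith
    have hsum : ∑ j, |z (s+1) j - z s j| ≤ 2 * η := by
      calc ∑ j, |z (s+1) j - z s j|
          ≤ ∑ j, ((z (s+1) j - z s j) + 2*(η * z s j)) :=
            Finset.sum_le_sum (fun j _ => habs j)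
        _ = (∑ j, z (s+1) j) - (∑ j, z s j) + 2*η*(∑ j, z s j) := by
            rw [Finset.sum_add_distrib, Finset.sum_sub_distrib, Finset.mul_sum]
            congr 1
            apply Finset.sum_congr rfl
            intro j _; ring
        _ = 2*η := by rw [(hkey (s+1) (by omega)).2, (hkey s hs1).2]; ring
    unfold tv
    linarith
  have htvsum : D * ∑ t ∈ Finset.Icc 2 T, tv (z t) (z (t-1)) ≤ D * (T * η) := by
    apply mul_le_mul_of_nonneg_left _ hD0.le
    calc ∑ t ∈ Finset.Icc 2 T, tv (z t) (z (t-1)) ≤ ∑ t ∈ Finset.Icc 2 T, η :=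
          Finset.sum_le_sum htv
      _ = ((T + 1 - 2 : ℕ) : ℝ) * η := by
          rw [Finset.sum_const, Nat.card_Icc, nsmul_eq_mul]
      _ ≤ T * η := mul_le_mul_of_nonneg_right
          (by exact_mod_cast Nat.cast_le.mpr (by omega : T + 1 - 2 ≤ T)) hηpos.le
  have hsqrt : Real.sqrt (8 * D * T * Real.log N) = 4 * D * T * η := by
    rw [hGeq]
    have h8 : 8 * D * (T:ℝ) * (2 * D * T * η ^ 2) = (4 * D * T * η)^2 := by ring
    rw [h8, Real.sqrt_sq (by positivity)]
  rw [hsqrt]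
  have h6 : (0:ℝ) ≤ (D - 1) * T * η :=
    mul_nonneg (mul_nonneg (by linarith) hT0.le) hηpos.le
  linarith [hmain, htvsum, h6]
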